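/- Let $G$ be a group and $H \trianglelefteq G$ a finite normal subgroup such that $G/H$ is abelian. Then for any finitely many elements $g_1, \dots, g_r \in G$ there exists an integer $s > 0$ such that the elements $g_1^s, \dots, g_r^s$ pairwise commute. -/

import Mathlib

/-! Conjugation maps `G` into the finite group `Aut H`, so `x ^ t` centralizes `H` for
`t = |Aut H|`. For `a = gᵢ ^ t` and `b = gⱼ ^ t` the commutator `c = b a b⁻¹ a⁻¹` lies in `H`,
so it commutes with `a`; hence `b aⁿ b⁻¹ = (c a)ⁿ = cⁿ aⁿ = aⁿ` for `n = |H|`, and `s = t n`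
works. -/

theorem commute_pow_of_conj_eq_mul {G : Type*} [Group G] {a b c : G} {n : ℕ}
    (hconj : b * a * b⁻¹ = c * a) (hca : Commute c a) (hcn : c ^ n = 1) :
    Commute (a ^ n) b := by
  have : b * a ^ n * b⁻¹ = a ^ n := by
    rw [← conj_pow, hconj, hca.mul_pow, hcn, one_mul]
  exact (mul_inv_eq_iff_eq_mul.mp this).symm

theorem Subgroup.pow_card_mulAut_mem_centralizer {G : Type*} [Group G] (H : Subgroup G)
    [H.Normal] [Finite H] (x : G) : x ^ Nat.card (MulAut H) ∈ Subgroup.centralizer H := by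
  rw [Subgroup.mem_centralizer_iff]
  intro h hh
  have hconj : MulAut.conjNormal (H := H) (x ^ Nat.card (MulAut H)) = 1 := by
    rw [map_pow, pow_card_eq_one']
  have := congrArg (fun σ : MulAut H => (σ ⟨h, hh⟩ : G)) hconj
  simp only [MulAut.conjNormal_apply, MulAut.one_apply] at this
  exact (mul_inv_eq_iff_eq_mul.mp this).symm

theorem Subgroup.pow_card_eq_one_of_mem {G : Type*} [Group G] (H : Subgroup G) [Finite H]
    {c : G} (hc : c ∈ H) : c ^ Nat.card H = 1 := by
  have : (⟨c, hc⟩ : H) ^ Nat.card H = 1 := pow_card_eq_one'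
  exact congrArg Subtype.val this

theorem QuotientGroup.commutator_mem_of_commute {G : Type*} [Group G] (H : Subgroup G)
    [H.Normal] {a b : G} (hab : (a : G ⧸ H) * b = b * a) : a * b * a⁻¹ * b⁻¹ ∈ H := by
  rw [← QuotientGroup.eq_one_iff]
  simp only [QuotientGroup.mk_mul, QuotientGroup.mk_inv, hab]
  group

/-- If `H` is a finite normal subgroup of `G` with abelian quotient `G ⧸ H`, then for
any finitely many elements `g₁, …, g_r` of `G` there is a single positive integer `s`
such that the powers `g₁^s, …, g_r^s` pairwise commute. -/
theorem pow_pairwise_commute_of_abelian_quotient {G : Type*} [Group G]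
    (H : Subgroup G) [H.Normal] (hH : (H : Set G).Finite)
    (hab : ∀ a b : G ⧸ H, a * b = b * a)
    (r : ℕ) (g : Fin r → G) :
    ∃ s : ℕ, 0 < s ∧ ∀ i j : Fin r, g i ^ s * g j ^ s = g j ^ s * g i ^ s := by
  have : Finite H := hH.to_subtype
  set t := Nat.card (MulAut H)
  refine ⟨t * Nat.card H, Nat.mul_pos Nat.card_pos Nat.card_pos, fun i j => ?_⟩
  set a := g i ^ t
  set b := g j ^ t
  have hcH : b * a * b⁻¹ * a⁻¹ ∈ H := QuotientGroup.commutator_mem_of_commute H (hab _ _)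
  have hca : Commute (b * a * b⁻¹ * a⁻¹) a :=
    Subgroup.mem_centralizer_iff.mp (H.pow_card_mulAut_mem_centralizer (g i)) _ hcH
  have hconj : b * a * b⁻¹ = (b * a * b⁻¹ * a⁻¹) * a := by group
  have key := commute_pow_of_conj_eq_mul hconj hca (H.pow_card_eq_one_of_mem hcH)
  simpa only [pow_mul] using (key.pow_right (Nat.card H)).eq
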